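/- Let σ be a positive n×n matrix measure on R with all moments finite, and suppose the Hilbert space L_2(R,σ) is infinite dimensional. Then the null space of vector polynomials (those with ∫⟨r, dσ r⟩ = 0) cannot contain n nonzero vector polynomials q_1,...,q_n whose heights are pairwise distinct modulo n. -/

import Mathlib

open Polynomial

/-- The height of an `n`-dimensional vector polynomial (0-indexed components):
`h(r) = max_j (n · deg R_j + j)`, with `deg 0 = ⊥` and `h(0) = ⊥`. -/
noncomputable def height {n : ℕ} (r : Fin n → Polynomial ℂ) : WithBot ℕ :=
  Finset.univ.sup fun j : Fin n => WithBot.map (fun d => n * d + (j : ℕ)) (r j).degree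

/-- The vector polynomial `e_{nk+i}(z) = z^k e_i`; in 0-indexed form `eVP n s = z^(s/n) e_(s%n)`,
corresponding to the 1-indexed `e_{s+1}`. -/
noncomputable def eVP (n : ℕ) (s : ℕ) : Fin n → Polynomial ℂ :=
  fun j => if (j : ℕ) = s % n then X ^ (s / n) else 0

/-- A positive `n×n` matrix measure `σ` on `ℝ` with all moments finite, encoded through the
(possibly degenerate) sesquilinear form `B f g = ∫_ℝ ⟨f(t), dσ(t) g(t)⟩` it induces on
`n`-dimensional vector polynomials (antilinear in the first argument). The axiom `mul_symm`
expresses that multiplication by the real variable `t` is symmetric for the form. -/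
structure MatMeasureForm (n : ℕ) where
  B : (Fin n → Polynomial ℂ) → (Fin n → Polynomial ℂ) → ℂ
  add_right : ∀ f g h, B f (g + h) = B f g + B f h
  smul_right : ∀ (c : ℂ) f g, B f (c • g) = c * B f g
  conj_symm : ∀ f g, B g f = (starRingEnd ℂ) (B f g)
  nonneg : ∀ f, 0 ≤ (B f f).re
  mul_symm : ∀ f g, B (fun j => X * f j) g = B f (fun j => X * g j)

/-!
Send a vector polynomial `r = (R₀, …, R_{n-1})` to the scalar polynomial `∑ⱼ zʲ Rⱼ(zⁿ)`. The
summands have degrees `n · deg Rⱼ + j`, pairwise distinct mod `n`, so this linear map is injective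
and turns the height into the degree. If the heights `a_j` of `q_j` exhaust the residues mod `n`,
every degree `≥ max a_j` is the degree of some `zˡ q_j`, and eliminating leading terms shows that
the `zˡ q_j` together with the finitely many `e_s`, `s < max a_j`, span all vector polynomials.
Each `zˡ q_j` is null: by Cauchy–Schwarz a vector of zero norm is orthogonal to everything, and
multiplication by `z` is symmetric. Hence the form has finite rank, so `L₂(ℝ, σ)` would be finite
dimensional.
-/

namespace MatMeasureForm

variable {n : ℕ} (M : MatMeasureForm n)

theorem add_left (f g h : Fin n → ℂ[X]) : M.B (f + g) h = M.B f h + M.B g h := by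
  rw [M.conj_symm, M.add_right, map_add, ← M.conj_symm, ← M.conj_symm]

theorem smul_left (c : ℂ) (f g : Fin n → ℂ[X]) :
    M.B (c • f) g = (starRingEnd ℂ) c * M.B f g := by
  rw [M.conj_symm, M.smul_right, map_mul, ← M.conj_symm]

/-- The form as a semi-inner product, to borrow the Cauchy–Schwarz inequality. -/
abbrev toCore : PreInnerProductSpace.Core ℂ (Fin n → ℂ[X]) where
  inner := M.B
  conj_inner_symm f g := (M.conj_symm g f).symm
  re_inner_nonneg := M.nonneg
  add_left := M.add_left
  smul_left f g c := M.smul_left c f g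

theorem B_eq_zero_of_B_self_eq_zero {f : Fin n → ℂ[X]} (hf : M.B f f = 0) (g : Fin n → ℂ[X]) :
    M.B f g = 0 := by
  let _ := M.toCore
  have h := InnerProductSpace.Core.inner_mul_inner_self_le (𝕜 := ℂ) f g
  change ‖M.B f g‖ * ‖M.B g f‖ ≤ (M.B f f).re * (M.B g g).re at h
  rw [hf, M.conj_symm f g, Complex.norm_conj, Complex.zero_re, zero_mul] at h
  exact norm_eq_zero.mp (mul_self_eq_zero.mp (le_antisymm h (mul_self_nonneg _)))

theorem B_X_smul_left (f g : Fin n → ℂ[X]) : M.B ((X : ℂ[X]) • f) g = M.B f ((X : ℂ[X]) • g) :=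
  M.mul_symm f g

theorem B_X_pow_smul_left (l : ℕ) (f g : Fin n → ℂ[X]) :
    M.B ((X : ℂ[X]) ^ l • f) g = M.B f ((X : ℂ[X]) ^ l • g) := by
  induction l generalizing f g with
  | zero => simp
  | succ l ih => rw [pow_succ', mul_smul, mul_smul, B_X_smul_left, ih, smul_comm]

def nullSpace : Submodule ℂ (Fin n → ℂ[X]) where
  carrier := {f | ∀ g, M.B f g = 0}
  add_mem' hf hg h := by rw [M.add_left, hf h, hg h, add_zero]
  zero_mem' g := by simpa using M.smul_left 0 0 g
  smul_mem' c f hf g := by rw [M.smul_left, hf g, mul_zero]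

theorem X_pow_smul_mem_nullSpace {q : Fin n → ℂ[X]} (hq : M.B q q = 0) (l : ℕ) :
    (X : ℂ[X]) ^ l • q ∈ M.nullSpace := fun g => by
  rw [M.B_X_pow_smul_left]
  exact M.B_eq_zero_of_B_self_eq_zero hq _

theorem span_X_pow_smul_le_nullSpace {ι : Type*} {q : ι → (Fin n → ℂ[X])}
    (hq : ∀ j, M.B (q j) (q j) = 0) :
    Submodule.span ℂ (Set.range fun x : ι × ℕ => (X : ℂ[X]) ^ x.2 • q x.1) ≤ M.nullSpace :=
  Submodule.span_le.mpr <| Set.range_subset_iff.mpr fun x =>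
    M.X_pow_smul_mem_nullSpace (hq x.1) x.2

end MatMeasureForm

section Expand

variable {R : Type*} [CommRing R] [IsDomain R] {n : ℕ}

theorem natDegree_X_pow_mul_expand (hn : 0 < n) (i : ℕ) {p : R[X]} (hp : p ≠ 0) :
    (X ^ i * expand R n p).natDegree = i + p.natDegree * n := by
  rw [natDegree_mul (pow_ne_zero i X_ne_zero) ((expand_ne_zero hn).mpr hp), natDegree_X_pow,
    natDegree_expand]

theorem degree_X_pow_mul_expand (hn : 0 < n) (i : ℕ) (p : R[X]) :
    (X ^ i * expand R n p).degree = WithBot.map (fun k => n * k + i) p.degree := by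
  rcases eq_or_ne p 0 with rfl | hp
  · simp
  rw [degree_mul, degree_X_pow, degree_eq_natDegree ((expand_ne_zero hn).mpr hp),
    natDegree_expand, degree_eq_natDegree hp, Nat.cast_withBot p.natDegree, WithBot.map_coe,
    ← Nat.cast_add, Nat.cast_withBot, add_comm, mul_comm]

end Expand

section Interleave

variable (R : Type*) [CommSemiring R] (n : ℕ)

/-- The identification `(R₀, …, R_{n-1}) ↦ ∑ⱼ zʲ Rⱼ(zⁿ)` of vector polynomials with scalar ones. -/
noncomputable def interleave : (Fin n → R[X]) →ₗ[R] R[X] :=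
  ∑ i : Fin n, LinearMap.mulLeft R ((X : R[X]) ^ (i : ℕ)) ∘ₗ (expand R n).toLinearMap ∘ₗ
    LinearMap.proj i

variable {R n}

theorem interleave_apply (r : Fin n → R[X]) :
    interleave R n r = ∑ i : Fin n, X ^ (i : ℕ) * expand R n (r i) := by
  simp [interleave]

theorem interleave_X_pow_smul (l : ℕ) (r : Fin n → R[X]) :
    interleave R n ((X : R[X]) ^ l • r) = X ^ (n * l) * interleave R n r := by
  simp only [interleave_apply, Finset.mul_sum, Pi.smul_apply, smul_eq_mul, map_mul, map_pow,
    expand_X, pow_mul]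
  exact Finset.sum_congr rfl fun i _ => by ring

end Interleave

theorem interleave_eVP {n : ℕ} (hn : 0 < n) (s : ℕ) : interleave ℂ n (eVP n s) = X ^ s := by
  rw [interleave_apply, Finset.sum_eq_single ⟨s % n, Nat.mod_lt s hn⟩]
  · simp [eVP, ← pow_mul, ← pow_add, Nat.mod_add_div]
  · intro i _ hi
    simp [eVP, Fin.ext_iff.not.mp hi]
  · simp

theorem height_eq_bot_iff {n : ℕ} {r : Fin n → ℂ[X]} : height r = ⊥ ↔ r = 0 := by
  simp [height, Finset.sup_eq_bot_iff, funext_iff]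

theorem degree_interleave {n : ℕ} (r : Fin n → ℂ[X]) : (interleave ℂ n r).degree = height r := by
  rw [interleave_apply, degree_sum_eq_of_disjoint]
  · exact Finset.sup_congr rfl fun i _ => degree_X_pow_mul_expand i.pos i (r i)
  · rintro i ⟨-, hi⟩ j ⟨-, hj⟩ hij hdeg
    have hri : r i ≠ 0 := by rintro h; simp [h] at hi
    have hrj : r j ≠ 0 := by rintro h; simp [h] at hj
    have hmod := congrArg (· % n) (natDegree_eq_of_degree_eq hdeg)
    simp only [natDegree_X_pow_mul_expand i.pos _ hri,
      natDegree_X_pow_mul_expand i.pos _ hrj, Nat.add_mul_mod_self_right,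
      Nat.mod_eq_of_lt i.isLt, Nat.mod_eq_of_lt j.isLt] at hmod
    exact hij (Fin.ext hmod)

theorem interleave_injective (n : ℕ) : Function.Injective (interleave ℂ n) := by
  rw [← LinearMap.ker_eq_bot, Submodule.eq_bot_iff]
  intro r hr
  rw [← height_eq_bot_iff, ← degree_interleave, LinearMap.mem_ker.mp hr, degree_zero]

section LinearAlgebra

variable {K V : Type*} [Field K] [AddCommGroup V] [Module K V]

theorem Submodule.eq_top_of_forall_exists_degree_eq {S : Submodule K V} {Φ : V →ₗ[K] K[X]}
    (hΦ : Function.Injective Φ) (hS : ∀ r, Φ r ≠ 0 → ∃ g ∈ S, (Φ g).degree = (Φ r).degree) :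
    S = ⊤ := by
  refine eq_top_iff'.mpr fun r => ?_
  induction hd : (Φ r).degree using WellFoundedLT.induction generalizing r with
  | ind d ih =>
    rcases eq_or_ne (Φ r) 0 with hr | hr
    · rw [(map_eq_zero_iff Φ hΦ).mp hr]
      exact S.zero_mem
    obtain ⟨g, hgS, hg⟩ := hS r hr
    have hg0 : Φ g ≠ 0 := fun h => hr (degree_eq_bot.mp (by rw [← hg, h, degree_zero]))
    set c := (Φ r).leadingCoeff / (Φ g).leadingCoeff
    have hlt : (Φ (r - c • g)).degree < d := by
      rw [← hd, map_sub, map_smul, smul_eq_C_mul]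
      refine degree_sub_lt_left ?_ hr ?_
      · rw [degree_C_mul (div_ne_zero (leadingCoeff_ne_zero.mpr hr)
          (leadingCoeff_ne_zero.mpr hg0)), hg]
      · rw [leadingCoeff_mul, leadingCoeff_C, div_mul_cancel₀ _ (leadingCoeff_ne_zero.mpr hg0)]
    simpa using S.add_mem (ih _ hlt (r - c • g) rfl) (S.smul_mem c hgS)

theorem exists_sum_smul_mem_of_span_sup_eq_top {ι : Type*} [Fintype ι] {e : ι → V}
    {W : Submodule K V} (hW : Submodule.span K (Set.range e) ⊔ W = ⊤) {N : ℕ}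
    (hN : Fintype.card ι < N) (p : Fin N → V) :
    ∃ c : Fin N → K, ∑ i, c i • p i ∈ W ∧ ∃ i, c i ≠ 0 := by
  have hQ : Submodule.span K (Set.range (W.mkQ ∘ e)) = ⊤ := by
    rw [Set.range_comp, ← Submodule.map_span, ← Submodule.range_mkQ W, LinearMap.range_eq_map,
      ← hW, Submodule.map_sup, Submodule.mkQ_map_self, sup_bot_eq]
  have : Module.Finite K (V ⧸ W) :=
    Module.finite_def.mpr (hQ ▸ Submodule.fg_span (Set.finite_range _))
  have hdep : ¬ LinearIndependent K (W.mkQ ∘ p) := fun hli => by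
    have := hli.fintype_card_le_finrank
    rw [Fintype.card_fin, ← finrank_top, ← hQ] at this
    exact (finrank_range_le_card _).trans_lt hN |>.not_ge this
  obtain ⟨c, hc, i, hi⟩ := Fintype.not_linearIndependent_iff.mp hdep
  refine ⟨c, ?_, i, hi⟩
  rw [← Submodule.Quotient.mk_eq_zero, ← W.mkQ_apply, map_sum]
  simpa using hc

end LinearAlgebra

theorem exists_height_eq_coe {n : ℕ} {r : Fin n → ℂ[X]} (hr : r ≠ 0) : ∃ a : ℕ, height r = a :=
  WithBot.ne_bot_iff_exists.mp (mt height_eq_bot_iff.mp hr) |>.imp fun _ h => h.symm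

theorem span_eVP_sup_span_X_pow_smul_eq_top {n : ℕ} {ι : Type*} {q : ι → (Fin n → ℂ[X])}
    {a : ι → ℕ} (ha : ∀ j, height (q j) = a j) (hcover : ∀ i : Fin n, ∃ j, a j % n = i)
    {H : ℕ} (hH : ∀ j, a j ≤ H) :
    Submodule.span ℂ (Set.range fun s : Fin H => eVP n s) ⊔
      Submodule.span ℂ (Set.range fun x : ι × ℕ => (X : ℂ[X]) ^ x.2 • q x.1) = ⊤ := by
  refine Submodule.eq_top_of_forall_exists_degree_eq (interleave_injective n) fun r hr => ?_
  obtain ⟨i, -⟩ : ∃ i, r i ≠ 0 := Function.ne_iff.mp fun h => hr (by rw [h]; exact map_zero _)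
  set e := (interleave ℂ n r).natDegree
  rw [degree_eq_natDegree hr]
  rcases lt_or_ge e H with heH | hHe
  · refine ⟨eVP n e, Submodule.mem_sup_left (Submodule.subset_span ⟨⟨e, heH⟩, rfl⟩), ?_⟩
    rw [interleave_eVP i.pos, degree_X_pow]
  · obtain ⟨j, hj⟩ := hcover ⟨e % n, Nat.mod_lt e i.pos⟩
    have haj : a j ≤ e := (hH j).trans hHe
    obtain ⟨l, hl⟩ : n ∣ e - a j := (Nat.modEq_iff_dvd' haj).mp hj
    refine ⟨(X : ℂ[X]) ^ l • q j,
      Submodule.mem_sup_right (Submodule.subset_span ⟨(j, l), rfl⟩), ?_⟩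
    rw [interleave_X_pow_smul, degree_mul, degree_X_pow, degree_interleave, ha, ← hl]
    norm_cast
    exact Nat.sub_add_cancel haj

/-- If `L_2(ℝ,σ)` is infinite dimensional (for every `N` the polynomials contain an
`N`-dimensional family which is linearly independent modulo the null space), then the null space
cannot contain `n` nonzero null vector polynomials whose heights are pairwise distinct mod `n`. -/
theorem no_n_null_generators (n : ℕ) (M : MatMeasureForm n)
    (hinf : ∀ N : ℕ, ∃ p : Fin N → (Fin n → Polynomial ℂ), ∀ c : Fin N → ℂ,
      M.B (∑ i, c i • p i) (∑ i, c i • p i) = 0 → ∀ i, c i = 0) :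
    ¬ ∃ q : Fin n → (Fin n → Polynomial ℂ),
        (∀ j, q j ≠ 0) ∧ (∀ j, M.B (q j) (q j) = 0) ∧
        (∀ i j, i ≠ j → ∀ a b : ℕ, height (q i) = (a : WithBot ℕ) →
          height (q j) = (b : WithBot ℕ) → ¬ (a % n = b % n)) := by
  rintro ⟨q, hq0, hqnull, hdist⟩
  choose a ha using fun j => exists_height_eq_coe (hq0 j)
  have hcover : ∀ i : Fin n, ∃ j, a j % n = i := by
    have hinj : Function.Injective fun j : Fin n => (⟨a j % n, Nat.mod_lt _ j.pos⟩ : Fin n) :=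
      fun i j hij => by_contra fun hne => hdist i j hne _ _ (ha i) (ha j) (Fin.mk.inj_iff.mp hij)
    exact fun i => (Finite.surjective_of_injective hinj i).imp fun j hj => congrArg Fin.val hj
  have hspan := span_eVP_sup_span_X_pow_smul_eq_top ha hcover fun j =>
    Finset.le_sup (Finset.mem_univ j)
  obtain ⟨p, hp⟩ := hinf (Finset.univ.sup a + 1)
  obtain ⟨c, hnull, i, hi⟩ := exists_sum_smul_mem_of_span_sup_eq_top hspan (by simp) p
  exact hi (hp c (M.span_X_pow_smul_le_nullSpace hqnull hnull _) i)
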